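/- Let R = GR(q^m, p^m) be a Galois ring with q = p^r. Then the number of free rank-1 submodules of the R-module R^3 equals (q^2 + q + 1) * q^{2(m-1)}. -/

import Mathlib

/-!
Let `R` be a finite local ring with maximal ideal `𝔪` and residue field of order `q`. Since
`𝔪` is nilpotent, some `a ≠ 0` kills `𝔪`; so a generator of a free rank-one submodule of
`R^(n+1)` cannot have all its coordinates in `𝔪`, i.e. it has a unit coordinate, and conversely
such a vector spans a free submodule. Two such vectors span the same submodule iff they differ
by a unit, so the points are the orbits of the free action of `Rˣ` on these vectors. Counting,
`|Rˣ| = |𝔪| (q - 1)` and there are `|𝔪|^(n+1) (q^(n+1) - 1)` such vectors, giving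
`(1 + q + ⋯ + q^n) |𝔪|^n` points.

For `R = (ZMod p^m)[X] / (f)` the ideal `(p)` is nilpotent and `R / (p) ≅ 𝔽_p[X] / (f mod p)`
is a field with `p^r` elements, so `R` is local with `|𝔪| = |R| / p^r = (p^r)^(m-1)`.
-/

open Polynomial IsLocalRing

theorem Ideal.exists_ne_zero_forall_mul_eq_zero_of_isNilpotent {R : Type*} [CommRing R]
    [Nontrivial R] {I : Ideal R} (hI : IsNilpotent I) : ∃ a ≠ 0, ∀ x ∈ I, a * x = 0 := by
  classical
  have hk : Nat.find hI ≠ 0 := fun h0 => by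
    simpa [h0] using Nat.find_spec hI
  obtain ⟨a, ha, ha0⟩ := Submodule.exists_mem_ne_zero_of_ne_bot
    (Nat.find_min hI (Nat.pred_lt hk) : I ^ (Nat.find hI - 1) ≠ 0)
  refine ⟨a, ha0, fun x hx => ?_⟩
  have : a * x ∈ I ^ (Nat.find hI - 1 + 1) := pow_succ I _ ▸ Ideal.mul_mem_mul ha hx
  rwa [Nat.sub_add_cancel (Nat.pos_of_ne_zero hk), Nat.find_spec hI, Ideal.zero_eq_bot,
    Ideal.mem_bot] at this

theorem IsLocalRing.of_isMaximal_of_le_nilradical {A : Type*} [CommRing A] {I : Ideal A}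
    (hI : I.IsMaximal) (hIn : I ≤ nilradical A) : IsLocalRing A :=
  .of_unique_max_ideal ⟨I, hI, fun J hJ =>
    (hI.eq_of_le hJ.ne_top (hIn.trans (nilradical_le_prime J))).symm⟩

theorem IsLocalRing.card_eq_card_maximalIdeal_mul_card_residueField {R : Type*} [CommRing R]
    [IsLocalRing R] :
    Nat.card R = Nat.card (maximalIdeal R) * Nat.card (ResidueField R) :=
  Submodule.card_eq_card_quotient_mul_card _

theorem IsLocalRing.card_units_add_card_maximalIdeal {R : Type*} [CommRing R] [Finite R]
    [IsLocalRing R] :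
    Nat.card Rˣ + Nat.card (maximalIdeal R) = Nat.card R := by
  have : Set.range ((↑) : Rˣ → R) = (maximalIdeal R : Set R)ᶜ := by
    ext x; simp [mem_maximalIdeal, mem_nonunits_iff, IsUnit]
  rw [← Nat.card_range_of_injective Units.val_injective, this, Nat.card_coe_set_eq,
    ← SetLike.coe_sort_coe, Nat.card_coe_set_eq, Set.ncard_compl_add_ncard]

section Unimodular

variable (R ι : Type*) [CommRing R]

def unimodular : SubMulAction Rˣ (ι → R) where
  carrier := {v | ∃ i, IsUnit (v i)}
  smul_mem' u v := fun ⟨i, hi⟩ => ⟨i, by simpa [Units.smul_def] using u.isUnit.mul hi⟩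

variable {R ι}

@[simp]
theorem mem_unimodular {v : ι → R} : v ∈ unimodular R ι ↔ ∃ i, IsUnit (v i) := Iff.rfl

namespace unimodular

theorem smul_left_injective {v : ι → R} (hv : v ∈ unimodular R ι) :
    Function.Injective fun a : R => a • v := by
  obtain ⟨i, hi⟩ := hv
  intro a b hab
  simpa using hi.mul_left_injective (congrFun hab i)

theorem stabilizer_eq_bot (v : unimodular R ι) : MulAction.stabilizer Rˣ v = ⊥ := by
  refine (Subgroup.eq_bot_iff_forall _).2 fun u hu => Units.ext ?_
  refine smul_left_injective v.2 ?_
  simpa [Units.smul_def] using congrArg Subtype.val (MulAction.mem_stabilizer_iff.1 hu)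

theorem nonempty_span_singleton_equiv {v : ι → R} (hv : v ∈ unimodular R ι) :
    Nonempty ((R ∙ v) ≃ₗ[R] R) := by
  rw [LinearMap.span_singleton_eq_range]
  exact ⟨(LinearEquiv.ofInjective _ (smul_left_injective hv)).symm⟩

theorem span_singleton_eq_span_singleton_iff {v w : ι → R} (hv : v ∈ unimodular R ι) :
    (R ∙ v) = (R ∙ w) ↔ ∃ u : Rˣ, u • w = v := by
  refine ⟨fun h => ?_, fun ⟨u, hu⟩ => hu ▸ Submodule.span_singleton_group_smul_eq R u w⟩
  obtain ⟨a, rfl⟩ := Submodule.mem_span_singleton.1 (h ▸ Submodule.mem_span_singleton_self v)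
  obtain ⟨b, hb⟩ := Submodule.mem_span_singleton.1 (h ▸ Submodule.mem_span_singleton_self w)
  have hab : a * b = 1 := smul_left_injective hv (by simp only [mul_smul, hb, one_smul])
  exact ⟨⟨a, b, hab, mul_comm a b ▸ hab⟩, rfl⟩

end unimodular

theorem exists_mem_unimodular_eq_span_singleton [IsArtinianRing R] [IsLocalRing R]
    {S : Submodule R (ι → R)} (e : S ≃ₗ[R] R) : ∃ v ∈ unimodular R ι, S = R ∙ v := by
  have hS : S = R ∙ (e.symm 1 : ι → R) := by
    refine le_antisymm (fun s hs => Submodule.mem_span_singleton.2 ⟨e ⟨s, hs⟩, ?_⟩)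
      ((Submodule.span_singleton_le_iff_mem _ _).2 (e.symm 1).2)
    simpa using congrArg Subtype.val (e.symm.map_smul (e ⟨s, hs⟩) 1).symm
  refine ⟨_, by_contra fun hv => ?_, hS⟩
  have h𝔪 : IsNilpotent (maximalIdeal R) :=
    jacobson_eq_maximalIdeal (⊥ : Ideal R) bot_ne_top ▸ IsArtinianRing.isNilpotent_jacobson_bot
  obtain ⟨a, ha0, ha⟩ := Ideal.exists_ne_zero_forall_mul_eq_zero_of_isNilpotent h𝔪
  have : a • e.symm 1 = 0 := Subtype.ext <| funext fun i =>
    ha _ ((mem_maximalIdeal _).2 fun hi => hv ⟨i, hi⟩)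
  exact ha0 (by simpa using congrArg e this)

noncomputable def unimodularOrbitsEquivFreeRankOne [IsArtinianRing R] [IsLocalRing R] :
    Quotient (MulAction.orbitRel Rˣ (unimodular R ι)) ≃
      {S : Submodule R (ι → R) // Nonempty (S ≃ₗ[R] R)} :=
  (Quotient.congrRight fun v w => by
      rw [MulAction.orbitRel_apply, MulAction.mem_orbit_iff, Setoid.ker_def, Subtype.mk.injEq,
        unimodular.span_singleton_eq_span_singleton_iff v.2]
      simp only [Subtype.ext_iff, SubMulAction.val_smul]).trans
    (Setoid.quotientKerEquivOfSurjective
      (fun v : unimodular R ι =>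
        ⟨R ∙ (v : ι → R), unimodular.nonempty_span_singleton_equiv v.2⟩)
      fun ⟨_, ⟨e⟩⟩ => by
        obtain ⟨v, hv, rfl⟩ := exists_mem_unimodular_eq_span_singleton e
        exact ⟨⟨v, hv⟩, rfl⟩)

theorem card_freeRankOne_mul_card_units [Finite R] [IsLocalRing R] :
    Nat.card {S : Submodule R (ι → R) // Nonempty (S ≃ₗ[R] R)} * Nat.card Rˣ =
      Nat.card (unimodular R ι) := by
  rw [Nat.card_congr (MulAction.selfEquivOrbitsQuotientProd unimodular.stabilizer_eq_bot),
    Nat.card_prod, Nat.card_congr unimodularOrbitsEquivFreeRankOne]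

theorem card_unimodular_add_card_maximalIdeal_pow [Finite R] [IsLocalRing R] [Finite ι] :
    Nat.card (unimodular R ι) + Nat.card (maximalIdeal R) ^ Nat.card ι =
      Nat.card R ^ Nat.card ι := by
  have : (unimodular R ι : Set (ι → R))ᶜ = Set.univ.pi fun _ => (maximalIdeal R : Set R) := by
    ext v; simp [mem_unimodular, mem_maximalIdeal, mem_nonunits_iff]
  calc Nat.card (unimodular R ι) + Nat.card (maximalIdeal R) ^ Nat.card ι
      = (unimodular R ι : Set (ι → R)).ncard + (unimodular R ι : Set (ι → R))ᶜ.ncard := by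
        rw [this, ← Nat.card_coe_set_eq, ← Nat.card_coe_set_eq,
          Nat.card_congr (Equiv.Set.univPi _), Nat.card_fun, SetLike.coe_sort_coe,
          SetLike.coe_sort_coe]
    _ = Nat.card R ^ Nat.card ι := by rw [Set.ncard_add_ncard_compl, Nat.card_fun]

open Finset in
theorem card_freeRankOne_fin_succ [Finite R] [IsLocalRing R] (n : ℕ) :
    Nat.card {S : Submodule R (Fin (n + 1) → R) // Nonempty (S ≃ₗ[R] R)} =
      (∑ i ∈ range (n + 1), Nat.card (ResidueField R) ^ i) * Nat.card (maximalIdeal R) ^ n := by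
  have hR := card_eq_card_maximalIdeal_mul_card_residueField (R := R)
  have hU := card_units_add_card_maximalIdeal (R := R)
  have hV := card_unimodular_add_card_maximalIdeal_pow (R := R) (ι := Fin (n + 1))
  rw [hR] at hU hV
  rw [Nat.card_fin] at hV
  refine Nat.eq_of_mul_eq_mul_right (Nat.card_pos (α := Rˣ)) ?_
  rw [card_freeRankOne_mul_card_units]
  zify at hU hV ⊢
  rw [eq_sub_of_add_eq hU, eq_sub_of_add_eq hV]
  linear_combination -(Nat.card (maximalIdeal R) : ℤ) ^ (n + 1) *
    geom_sum_mul (Nat.card (ResidueField R) : ℤ) (n + 1)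

end Unimodular

theorem ZMod.ker_castHom {m n : ℕ} (h : m ∣ n) :
    RingHom.ker (ZMod.castHom h (ZMod m)) = Ideal.span {(m : ZMod n)} := by
  ext x
  refine ⟨fun hx => ?_, fun hx => ?_⟩
  · obtain ⟨a, rfl⟩ := ZMod.intCast_surjective x
    rw [RingHom.mem_ker, map_intCast, ZMod.intCast_zmod_eq_zero_iff_dvd] at hx
    obtain ⟨b, rfl⟩ := hx
    exact Ideal.mem_span_singleton.2 ⟨b, by push_cast; rfl⟩
  · obtain ⟨y, rfl⟩ := Ideal.mem_span_singleton.1 hx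
    rw [RingHom.mem_ker, map_mul, map_natCast, ZMod.natCast_self, zero_mul]

namespace AdjoinRoot

variable {A B : Type*} [CommRing A] [CommRing B]

noncomputable def quotMapKerEquiv {g : A →+* B} (hg : Function.Surjective g) (f : A[X]) :
    AdjoinRoot f ⧸ (RingHom.ker g).map (of f) ≃+* AdjoinRoot (f.map g) :=
  (quotAdjoinRootEquivQuotPolynomialQuot _ f).trans <|
    Ideal.quotientEquiv _ _ (mapEquiv (RingHom.quotientKerEquivOfSurjective hg)) <| by
      rw [Ideal.map_span, Set.image_singleton, RingEquiv.coe_toRingHom, mapEquiv_apply,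
        Polynomial.map_map]
      rfl

theorem natCard_of_monic {f : A[X]} (hf : f.Monic) :
    Nat.card (AdjoinRoot f) = Nat.card A ^ f.natDegree := by
  rw [Nat.card_congr (powerBasis' hf).basis.equivFun.toEquiv, Nat.card_fun, Nat.card_fin,
    powerBasis'_dim]

theorem finite_of_monic [Finite A] {f : A[X]} (hf : f.Monic) : Finite (AdjoinRoot f) :=
  have := (powerBasis' hf).finite
  Module.finite_of_finite A

end AdjoinRoot

section ReductionModPrime

variable {p n : ℕ} (f : (ZMod n)[X])

noncomputable def quotSpanNatCastEquiv (h : p ∣ n) :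
    AdjoinRoot f ⧸ Ideal.span {(p : AdjoinRoot f)} ≃+*
      AdjoinRoot (f.map (ZMod.castHom h (ZMod p))) :=
  (Ideal.quotEquivOfEq (by rw [ZMod.ker_castHom, Ideal.map_span, Set.image_singleton,
    map_natCast])).trans (AdjoinRoot.quotMapKerEquiv (ZMod.ringHom_surjective _) f)

theorem isMaximal_span_natCast [Fact p.Prime] (h : p ∣ n)
    (hfi : Irreducible (f.map (ZMod.castHom h (ZMod p)))) :
    (Ideal.span {(p : AdjoinRoot f)}).IsMaximal :=
  have := Fact.mk hfi
  Ideal.Quotient.maximal_of_isField _ <|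
    (quotSpanNatCastEquiv f h).toMulEquiv.isField (Field.toIsField _)

theorem natCard_quotient_span_natCast [Fact p.Prime] (h : p ∣ n) (hf : f.Monic) :
    Nat.card (AdjoinRoot f ⧸ Ideal.span {(p : AdjoinRoot f)}) = p ^ f.natDegree := by
  rw [Nat.card_congr (quotSpanNatCastEquiv f h).toEquiv, AdjoinRoot.natCard_of_monic (hf.map _),
    hf.natDegree_map, Nat.card_zmod]

end ReductionModPrime

theorem span_natCast_le_nilradical {p m : ℕ} (f : (ZMod (p ^ m))[X]) :
    Ideal.span {(p : AdjoinRoot f)} ≤ nilradical (AdjoinRoot f) := by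
  refine Ideal.span_le.2 <| Set.singleton_subset_iff.2 <| mem_nilradical.2 ⟨m, ?_⟩
  rw [← Nat.cast_pow, ← map_natCast (AdjoinRoot.of f), ZMod.natCast_self, map_zero]

theorem card_points_PHG_general (p r m : ℕ) (hp : p.Prime) (hm : 0 < m)
    (f : (ZMod (p ^ m))[X]) (hf : f.Monic) (hfd : f.natDegree = r)
    (hfi : Irreducible (f.map (ZMod.castHom (dvd_pow_self p hm.ne') (ZMod p)))) :
    Nat.card {S : Submodule ((ZMod (p ^ m))[X] ⧸ Ideal.span {f})
        (Fin 3 → ((ZMod (p ^ m))[X] ⧸ Ideal.span {f})) //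
      Nonempty (S ≃ₗ[(ZMod (p ^ m))[X] ⧸ Ideal.span {f}]
        ((ZMod (p ^ m))[X] ⧸ Ideal.span {f}))} =
    ((p ^ r) ^ 2 + p ^ r + 1) * (p ^ r) ^ (2 * (m - 1)) := by
  have := Fact.mk hp
  have := AdjoinRoot.finite_of_monic hf
  have hmax := isMaximal_span_natCast f (dvd_pow_self p hm.ne') hfi
  have := IsLocalRing.of_isMaximal_of_le_nilradical hmax (span_natCast_le_nilradical f)
  have hq : Nat.card (ResidueField (AdjoinRoot f)) = p ^ r := by
    rw [← hfd, ← natCard_quotient_span_natCast f (dvd_pow_self p hm.ne') hf,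
      eq_maximalIdeal hmax]
    rfl
  have h𝔪 : Nat.card (maximalIdeal (AdjoinRoot f)) = (p ^ r) ^ (m - 1) := by
    have hR := card_eq_card_maximalIdeal_mul_card_residueField (R := AdjoinRoot f)
    rw [AdjoinRoot.natCard_of_monic hf, Nat.card_zmod, hfd, hq] at hR
    refine Nat.eq_of_mul_eq_mul_right (pow_pos hp.pos r) (hR.symm.trans ?_)
    rw [← pow_succ, Nat.sub_add_cancel hm, ← pow_mul, ← pow_mul, mul_comm]
  refine (card_freeRankOne_fin_succ (R := AdjoinRoot f) 2).trans ?_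
  rw [hq, h𝔪, Finset.sum_range_succ, Finset.sum_range_succ, Finset.sum_range_one]
  ring

/-- Let `R = GR(q^m, p^m)` be a Galois ring with `q = p^r`, realized as
`Z_{p^m}[X]/(f)` with `f` monic of degree `r` and irreducible mod `p`.
The number of free rank-1 submodules of `R^3` (the points of `PHG(2,R)`)
equals `(q^2 + q + 1) * q^(2(m-1))`. -/
theorem card_points_PHG (p r m : ℕ) (hp : p.Prime) (hr : 0 < r) (hm : 0 < m)
    (f : (ZMod (p ^ m))[X]) (hf : f.Monic) (hfd : f.natDegree = r)
    (hfi : Irreducible (f.map (ZMod.castHom (dvd_pow_self p hm.ne') (ZMod p)))) :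
    Nat.card {S : Submodule ((ZMod (p ^ m))[X] ⧸ Ideal.span {f})
        (Fin 3 → ((ZMod (p ^ m))[X] ⧸ Ideal.span {f})) //
      Nonempty (S ≃ₗ[(ZMod (p ^ m))[X] ⧸ Ideal.span {f}]
        ((ZMod (p ^ m))[X] ⧸ Ideal.span {f}))} =
    ((p ^ r) ^ 2 + p ^ r + 1) * (p ^ r) ^ (2 * (m - 1)) :=
  card_points_PHG_general p r m hp hm f hf hfd hfi
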